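/- Let G(E) be a well-formed TFG and c a well-defined configuration. If c(p) > 0 for some node p, then there exists a root node v (a node with no incoming arc) such that v →* p and c(v) > 0. -/

import Mathlib

/-! A positive node that is not a root has a positive predecessor: along a redundancy arc by
(CEq) at the node itself, since a positive sum has a positive summand, and along an agglomeration
arc because the parent's value is the sum over its children. Arcs are finite in number and form
no cycle (T5), so walking backwards this way must stop, and it can only stop at a root. -/

open Finset

/-- A Petri net over a type of places `P`. -/
structure PetriNet (P : Type) where
  Trans : Type
  pre : Trans → P → ℕ
  post : Trans → P → ℕ

/-- Firing relation between markings. -/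
def PetriNet.fire {P : Type} (N : PetriNet P) (m m' : P → ℕ) : Prop :=
  ∃ t : N.Trans, (∀ p, N.pre t p ≤ m p) ∧ ∀ p, m' p = m p - N.pre t p + N.post t p

/-- Reachability of a marking from an initial one. -/
def PetriNet.reach {P : Type} (N : PetriNet P) (m0 m : P → ℕ) : Prop :=
  Relation.ReflTransGen N.fire m0 m

/-- A marked net is safe (1-bounded) when every reachable marking has at most one token per place. -/
def PetriNet.Safe {P : Type} (N : PetriNet P) (m0 : P → ℕ) : Prop :=
  ∀ m, N.reach m0 m → ∀ p, m p ≤ 1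

/-- Two places are concurrent when some reachable marking marks both positively. -/
def PetriNet.ConcPlaces {P : Type} (N : PetriNet P) (m0 : P → ℕ) (p q : P) : Prop :=
  ∃ m, N.reach m0 m ∧ 0 < m p ∧ 0 < m q

/-- A Token Flow Graph: redundancy arcs `R`, agglomeration arcs `A` (disjoint from `R`,
enforced in well-formedness), and constant nodes given by `kval`. -/
structure TFG (V : Type) [DecidableEq V] where
  R : Finset (V × V)
  A : Finset (V × V)
  kval : V → Option ℕ

variable {V : Type} [DecidableEq V]

def TFG.Edge (G : TFG V) (v w : V) : Prop := (v, w) ∈ G.R ∨ (v, w) ∈ G.A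

/-- `G.Reach v w` means `v →* w`. -/
def TFG.Reach (G : TFG V) : V → V → Prop := Relation.ReflTransGen G.Edge

/-- Successor set `succ(v)` (includes `v` itself). -/
def TFG.succs (G : TFG V) (v : V) : Set V := {w | G.Reach v w}

/-- A root has no incoming arc. -/
def TFG.IsRoot (G : TFG V) (v : V) : Prop := ∀ w, ¬ G.Edge w v

/-- A ∘-leaf has no outgoing agglomeration arc. -/
def TFG.IsCircLeaf (G : TFG V) (v : V) : Prop := ∀ w, (v, w) ∉ G.A

/-- The set `X` such that `v ∘→ X` (agglomeration children of `v`). -/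
def TFG.aggChildren (G : TFG V) (v : V) : Finset V :=
  (G.A.filter (fun e => e.1 = v)).image Prod.snd

/-- The set `X` such that `X →• v` (redundancy parents of `v`). -/
def TFG.redParents (G : TFG V) (v : V) : Finset V :=
  (G.R.filter (fun e => e.2 = v)).image Prod.fst

/-- A configuration is a partial valuation of the nodes; it must agree with constant nodes. -/
def TFG.IsConfig (G : TFG V) (c : V → Option ℕ) : Prop :=
  ∀ v n, G.kval v = some n → c v = some n

/-- A configuration is total when it is defined on every node. -/
def TotalConf (c : V → Option ℕ) : Prop := ∀ v, c v ≠ none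

/-- Value of a configuration at a node (0 if undefined). -/
def cval (c : V → Option ℕ) (v : V) : ℕ := (c v).getD 0

/-- Well-definedness of a configuration: conditions (CBot) and (CEq). -/
def TFG.WellDef (G : TFG V) (c : V → Option ℕ) : Prop :=
  (∀ v w, G.Edge v w → (c v = none ↔ c w = none)) ∧
  (∀ v n, c v = some n →
    ((G.aggChildren v).Nonempty → n = ∑ w ∈ G.aggChildren v, cval c w) ∧
    ((G.redParents v).Nonempty → n = ∑ w ∈ G.redParents v, cval c w))

/-- A system of reduction equations: `(v, X)` stands for the equation `v = ∑_{w ∈ X} w`. -/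
abbrev EqSys (V : Type) := Finset (V × Finset V)

/-- A (non-negative integer) solution of the system `E`. -/
def Solves (E : EqSys V) (s : V → ℕ) : Prop :=
  ∀ e ∈ E, s e.1 = ∑ w ∈ e.2, s w

/-- `E, ⟦c⟧` is consistent: some solution of `E` extends the partial valuation `c`. -/
def ConsistentWith (E : EqSys V) (c : V → Option ℕ) : Prop :=
  ∃ s : V → ℕ, Solves E s ∧ ∀ v n, c v = some n → s v = n

/-- Variables occurring in `E`. -/
def fvars (E : EqSys V) : Set V := {v | ∃ e ∈ E, v = e.1 ∨ v ∈ e.2}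

/-- View a marking over the set of places `P` as a partial configuration over `V`. -/
def mconf (P : Set V) [DecidablePred (· ∈ P)] (m : ↥P → ℕ) : V → Option ℕ :=
  fun v => if h : v ∈ P then some (m ⟨v, h⟩) else none

/-- Restriction of a configuration to a set of places, seen as a marking. -/
def restrict (c : V → Option ℕ) (P : Set V) : ↥P → ℕ := fun p => cval c ↑p

/-- Compatibility `c ≡ m` of a configuration with a marking on `P`. -/
def CompatM (c : V → Option ℕ) (P : Set V) (m : ↥P → ℕ) : Prop :=
  ∀ p : ↥P, c ↑p = some (m p)

/-- A solution of `E` agrees with a marking on `P`. -/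
def AgreesOn (s : V → ℕ) (P : Set V) (m : ↥P → ℕ) : Prop := ∀ p : ↥P, s ↑p = m p

/-- `E`-equivalence `(N1,m1) ▷_E (N2,m2)`: conditions (A1), (A2), (A3). -/
structure EEquiv (E : EqSys V) (P1 P2 : Set V)
    (N1 : PetriNet ↥P1) (m1 : ↥P1 → ℕ) (N2 : PetriNet ↥P2) (m2 : ↥P2 → ℕ) : Prop where
  A1l : ∀ m, N1.reach m1 m → ∃ s, Solves E s ∧ AgreesOn s P1 m
  A1r : ∀ m, N2.reach m2 m → ∃ s, Solves E s ∧ AgreesOn s P2 m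
  A2 : ∃ s, Solves E s ∧ AgreesOn s P1 m1 ∧ AgreesOn s P2 m2
  A3 : ∀ m1' m2', (∃ s, Solves E s ∧ AgreesOn s P1 m1' ∧ AgreesOn s P2 m2') →
      (N1.reach m1 m1' ↔ N2.reach m2 m2')

/-- Well-formedness of a TFG for an equivalence statement: conditions (T1)–(T6). -/
structure WellFormed (G : TFG V) (E : EqSys V) (P1 P2 : Set V) : Prop where
  T1 : {v | G.kval v = none} = P1 ∪ P2 ∪ fvars E
  T2 : ∀ v, G.kval v ≠ none → G.IsRoot v
  T3a : ∀ p p' q, (p, q) ∈ G.A → G.Edge p' q → p' = p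
  T3b : ∀ p q, ¬((p, q) ∈ G.R ∧ (p, q) ∈ G.A)
  T4 : ∀ v X, ((X = G.aggChildren v ∨ X = G.redParents v) ∧ X.Nonempty) ↔ (v, X) ∈ E
  T5 : ∀ v, ¬ Relation.TransGen G.Edge v v
  T6root : ∀ v, G.kval v = none → (G.IsRoot v ↔ v ∈ P2)
  T6leaf : ∀ v, G.kval v = none → (G.IsCircLeaf v ↔ v ∈ P1)

/-- Node concurrency relation of the TFG: both nodes are positive in some
total, well-defined configuration whose restriction to `N2` is reachable. -/
def NodeConc (G : TFG V) (P2 : Set V) [DecidablePred (· ∈ P2)]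
    (N2 : PetriNet ↥P2) (m2 : ↥P2 → ℕ) (v w : V) : Prop :=
  ∃ c, G.IsConfig c ∧ TotalConf c ∧ G.WellDef c ∧ N2.reach m2 (restrict c P2) ∧
    0 < cval c v ∧ 0 < cval c w

theorem Relation.wellFounded_of_finite_of_acyclic {α : Type*} {r : α → α → Prop}
    (hfin : {x : α × α | r x.1 x.2}.Finite) (hacyc : ∀ a, ¬ Relation.TransGen r a a) :
    WellFounded r := by
  -- Measure a node by the number of arcs ending at one of its ancestors; arcs strictly
  -- decrease it, since the arc `(a, b)` itself is counted for `b` but, by acyclicity, not for `a`.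
  let arcsInto (a : α) : Set (α × α) := {x | r x.1 x.2 ∧ Relation.ReflTransGen r x.2 a}
  refine Subrelation.wf (fun {a b} hab => ?_) (measure fun a => (arcsInto a).ncard).wf
  refine Set.ncard_lt_ncard ⟨fun x hx => ⟨hx.1, hx.2.tail hab⟩, fun hsub => ?_⟩
    (hfin.subset fun x hx => hx.1)
  have hab_into_b : (a, b) ∈ arcsInto b := ⟨hab, .refl⟩
  exact hacyc b (Relation.TransGen.tail' (hsub hab_into_b).2 hab)

namespace TFG

variable (G : TFG V) {c : V → Option ℕ} {v w : V}

theorem mem_redParents : v ∈ G.redParents w ↔ (v, w) ∈ G.R := by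
  simp [redParents]

theorem mem_aggChildren : w ∈ G.aggChildren v ↔ (v, w) ∈ G.A := by
  simp [aggChildren]

theorem finite_edge : {x : V × V | G.Edge x.1 x.2}.Finite :=
  (G.R ∪ G.A).finite_toSet.subset fun _ hx => Finset.mem_union.2 hx

theorem wellFounded_edge (hacyc : ∀ v, ¬ Relation.TransGen G.Edge v v) : WellFounded G.Edge :=
  Relation.wellFounded_of_finite_of_acyclic G.finite_edge hacyc

variable {G}

theorem WellDef.exists_redParent_pos (hwd : G.WellDef c) (hR : (v, w) ∈ G.R)
    (hw : 0 < cval c w) : ∃ u ∈ G.redParents w, 0 < cval c u := by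
  obtain ⟨n, hcw⟩ : ∃ n, c w = some n := Option.ne_none_iff_exists'.1 fun h => by
    simp [cval, h] at hw
  have hsum := (hwd.2 w n hcw).2 ⟨v, (G.mem_redParents).2 hR⟩
  rw [← Finset.sum_pos_iff, ← hsum]
  simpa [cval, hcw] using hw

theorem WellDef.cval_le_of_mem_A (hwd : G.WellDef c) (hA : (v, w) ∈ G.A) :
    cval c w ≤ cval c v := by
  cases hcv : c v with
  | none => simp [cval, hcv, (hwd.1 v w (Or.inr hA)).1 hcv]
  | some n =>
    have hw : w ∈ G.aggChildren v := (G.mem_aggChildren).2 hA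
    calc cval c w ≤ ∑ x ∈ G.aggChildren v, cval c x :=
          Finset.single_le_sum (fun _ _ => Nat.zero_le _) hw
      _ = cval c v := by rw [← (hwd.2 v n hcv).1 ⟨w, hw⟩]; simp [cval, hcv]

theorem WellDef.exists_edge_pos (hwd : G.WellDef c) (hw : 0 < cval c w)
    (hroot : ¬ G.IsRoot w) : ∃ v, G.Edge v w ∧ 0 < cval c v := by
  obtain ⟨v, hR | hA⟩ : ∃ v, G.Edge v w := by simpa [IsRoot] using hroot
  · obtain ⟨u, hu, hpos⟩ := hwd.exists_redParent_pos hR hw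
    exact ⟨u, Or.inl ((G.mem_redParents).1 hu), hpos⟩
  · exact ⟨v, Or.inr hA, hw.trans_le (hwd.cval_le_of_mem_A hA)⟩

theorem WellDef.exists_isRoot_reach_pos (hwd : G.WellDef c) (hwf : WellFounded G.Edge)
    (hw : 0 < cval c w) : ∃ v, G.IsRoot v ∧ G.Reach v w ∧ 0 < cval c v := by
  induction w using hwf.induction with
  | _ w ih =>
    by_cases hroot : G.IsRoot w
    · exact ⟨w, hroot, .refl, hw⟩
    obtain ⟨u, hu, hupos⟩ := hwd.exists_edge_pos hw hroot
    obtain ⟨v, hv, hvu, hvpos⟩ := ih u hu hupos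
    exact ⟨v, hv, hvu.tail hu, hvpos⟩

end TFG

theorem token_propagation_backward_general {V : Type} [DecidableEq V] (G : TFG V) (E : EqSys V)
    (P1 P2 : Set V) (hwf : WellFormed G E P1 P2) (c : V → Option ℕ) (hwd : G.WellDef c)
    (p : V) (hp : 0 < cval c p) :
    ∃ v : V, G.IsRoot v ∧ G.Reach v p ∧ 0 < cval c v :=
  hwd.exists_isRoot_reach_pos (G.wellFounded_edge hwf.T5) hp

theorem token_propagation_backward {V : Type} [DecidableEq V] (G : TFG V) (E : EqSys V)
    (P1 P2 : Set V) [DecidablePred (· ∈ P1)] [DecidablePred (· ∈ P2)]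
    (N1 : PetriNet ↥P1) (m1 : ↥P1 → ℕ) (N2 : PetriNet ↥P2) (m2 : ↥P2 → ℕ)
    (hwf : WellFormed G E P1 P2) (heq : EEquiv E P1 P2 N1 m1 N2 m2)
    (c : V → Option ℕ) (hc : G.IsConfig c) (hwd : G.WellDef c)
    (p : V) (hp : 0 < cval c p) :
    ∃ v : V, G.IsRoot v ∧ G.Reach v p ∧ 0 < cval c v :=
  token_propagation_backward_general G E P1 P2 hwf c hwd p hp
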